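/- arXiv:2201.04568 — 3 statements merged into one kernel-verified Lean document; each statement's English description precedes it below -/
import Mathlib

section
/- On a U_q(sl₂)-module of highest weight λ, the truncated extremal projector p_m(s) = Σ_{k=0}^m f^k e^k (−1)^k q^{k(s−1)} / ([k]_q! ∏_{i=1}^k [h+s+i]_q) acts on a weight vector v of weight η = λ − lα (i.e. e-string depth l ≤ m) as the scalar c ∏_{k=1}^{l} [s−k]_q/[s+η(h)+k]_q with c = q^{−lη(h) − l(l+1)} ≠ 0, whenever all the denominators [η(h)+s+i]_q, 1 ≤ i ≤ l, are nonzero. -/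
/-- `[z]_q = (q^z - q^{-z})/(q - q⁻¹)` with `q^z := exp(z log q)`. -/
noncomputable def qnum (q z : ℂ) : ℂ :=
  (Complex.exp (z * Complex.log q) - Complex.exp (-z * Complex.log q)) / (q - q⁻¹)

/-- `q^z := exp(z log q)`. -/
noncomputable def qpow (q z : ℂ) : ℂ := Complex.exp (z * Complex.log q)

/-!
On `v_l` the operator `f^k e^k` acts by `[l]_q [l-1]_q ⋯ [l-k+1]_q · [a+1]_q ⋯ [a+k]_q` with
`a = λ - l` (and by `0` for `k > l`), so `p_m(s)` acts by a scalar which is a terminating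
q-Chu–Vandermonde sum in the parameters `a` and `b = η + s`. Cleared of its denominator
`[b+1]_q ⋯ [b+l]_q`, the sum `T_l(b)` satisfies, by the q-Pascal rule,
`T_{l+1}(b) = (1 - q^{2(b-a+l)}) [b+l+1]_q T_l(b) + q^{2(b-a+l)+a+1} [b-a]_q T_l(b+1)`,
and so does `q^{-l(a+1)} [b-a+l-1]_q ⋯ [b-a]_q`; induction on `l`, for all `b` at once, identifies
the two.
-/

open Finset

section QNumbers

variable (q : ℂ)

lemma qpow_add (x y : ℂ) : qpow q (x + y) = qpow q x * qpow q y := by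
  simp only [qpow, add_mul, Complex.exp_add]

lemma qpow_zero : qpow q 0 = 1 := by simp [qpow]

lemma qpow_neg (x : ℂ) : qpow q (-x) = (qpow q x)⁻¹ := by
  simp only [qpow, neg_mul, Complex.exp_neg]

lemma qpow_mul_qpow_of_add_eq {x y z : ℂ} (h : x + y = z) : qpow q x * qpow q y = qpow q z := by
  rw [← qpow_add, h]

lemma qnum_eq (x : ℂ) : qnum q x = (qpow q x - qpow q (-x)) / (q - q⁻¹) := rfl

lemma qnum_zero : qnum q 0 = 0 := by simp [qnum]

lemma qnum_neg (x : ℂ) : qnum q (-x) = -qnum q x := by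
  rw [qnum_eq, qnum_eq, neg_neg, ← neg_div, neg_sub]

lemma qnum_add (x y : ℂ) : qnum q (x + y) = qpow q (-y) * qnum q x + qpow q x * qnum q y := by
  simp only [qnum_eq, neg_add, qpow_add]
  ring

lemma qnum_sub (x y : ℂ) : qnum q (x - y) = qpow q y * qnum q x - qpow q x * qnum q y := by
  rw [sub_eq_add_neg, qnum_add, neg_neg, qnum_neg]
  ring

lemma qpow_neg_mul_qnum (u w : ℂ) :
    qpow q (-w) * qnum q u =
      (1 - qpow q (2 * u)) * qnum q (u + w) + qpow q (2 * u + w) * qnum q u := by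
  have h₁ := qnum_add q u w
  have h₂ : qnum q (u + w) = qpow q (-u) * qnum q w + qpow q w * qnum q u := by
    rw [add_comm, qnum_add]
  have e₁ : qpow q (2 * u) * qpow q (-u) = qpow q u := qpow_mul_qpow_of_add_eq q (by ring)
  have e₂ : qpow q (2 * u) * qpow q w = qpow q (2 * u + w) := qpow_mul_qpow_of_add_eq q rfl
  linear_combination -h₁ + qpow q (2 * u) * h₂ + qnum q w * e₁ + qnum q u * e₂

lemma qnum_natCast_ne_zero (hq0 : q ≠ 0) (hq : ∀ n : ℕ, 0 < n → q ^ n ≠ 1) {n : ℕ} (hn : 0 < n) :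
    qnum q n ≠ 0 := by
  have hpow (m : ℕ) : qpow q m = q ^ m := by rw [qpow, Complex.exp_nat_mul, Complex.exp_log hq0]
  have key {m : ℕ} (hm : 0 < m) : q ^ m - (q ^ m)⁻¹ ≠ 0 := fun h => by
    refine hq (2 * m) (by omega) ?_
    rw [sub_eq_zero] at h
    rw [two_mul, pow_add]
    nth_rw 2 [h]
    exact mul_inv_cancel₀ (pow_ne_zero m hq0)
  rw [qnum_eq, qpow_neg, hpow]
  exact div_ne_zero (key hn) (by simpa using key one_pos)

end QNumbers

noncomputable def qFactorial (q : ℂ) (k : ℕ) : ℂ := ∏ i ∈ Icc 1 k, qnum q i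

noncomputable def qAscFactorial (q x : ℂ) (k : ℕ) : ℂ := ∏ j ∈ range k, qnum q (x + j)

noncomputable def qDescFactorial (q x : ℂ) (k : ℕ) : ℂ := ∏ j ∈ range k, qnum q (x - j)

noncomputable def qChoose (q x : ℂ) (k : ℕ) : ℂ := qDescFactorial q x k / qFactorial q k

section QFactorials

variable (q : ℂ)

lemma qFactorial_succ (k : ℕ) : qFactorial q (k + 1) = qFactorial q k * qnum q (k + 1) := by
  rw [qFactorial, prod_Icc_succ_top (by omega), Nat.cast_succ, qFactorial]

lemma qFactorial_ne_zero (hq : ∀ n : ℕ, qnum q (n + 1) ≠ 0) (k : ℕ) : qFactorial q k ≠ 0 := by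
  induction k with
  | zero => simp [qFactorial]
  | succ k ih => rw [qFactorial_succ]; exact mul_ne_zero ih (hq k)

lemma qDescFactorial_succ (x : ℂ) (k : ℕ) :
    qDescFactorial q x (k + 1) = qDescFactorial q x k * qnum q (x - k) :=
  prod_range_succ _ _

lemma qDescFactorial_add_one_succ (x : ℂ) (k : ℕ) :
    qDescFactorial q (x + 1) (k + 1) = qnum q (x + 1) * qDescFactorial q x k := by
  rw [qDescFactorial, prod_range_succ', Nat.cast_zero, sub_zero, mul_comm, qDescFactorial]
  exact congrArg _ (prod_congr rfl fun j _ => by push_cast; ring_nf)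

lemma qDescFactorial_sub_one (x : ℂ) (l : ℕ) :
    qDescFactorial q (x - 1) l = ∏ i ∈ Icc 1 l, qnum q (x - i) := by
  rw [qDescFactorial, ← Ico_add_one_right_eq_Icc, prod_Ico_eq_prod_range, Nat.add_sub_cancel]
  exact prod_congr rfl fun j _ => by push_cast; ring_nf

lemma qAscFactorial_eq_qDescFactorial (x : ℂ) (k : ℕ) :
    qAscFactorial q x k = qDescFactorial q (x + k - 1) k := by
  rw [qAscFactorial, ← prod_range_reflect]
  refine prod_congr rfl fun j hj => ?_
  rw [mem_range] at hj
  rw [Nat.cast_sub (by omega), Nat.cast_sub (by omega)]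
  ring_nf

lemma qChoose_zero (x : ℂ) : qChoose q x 0 = 1 := by
  simp [qChoose, qDescFactorial, qFactorial]

lemma qChoose_self_succ (l : ℕ) : qChoose q l (l + 1) = 0 := by
  rw [qChoose, qDescFactorial_succ, sub_self, qnum_zero, mul_zero, zero_div]

lemma qChoose_succ_succ {k : ℕ} (hk : qnum q (k + 1) ≠ 0) (x : ℂ) :
    qChoose q (x + 1) (k + 1) =
      qpow q (-(k + 1)) * qChoose q x (k + 1) + qpow q (x - k) * qChoose q x k := by
  have hsplit : qnum q (x + 1) =
      qpow q (-(k + 1)) * qnum q (x - k) + qpow q (x - k) * qnum q (k + 1) := by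
    rw [← qnum_add]; ring_nf
  rw [qChoose, qChoose, qChoose, qDescFactorial_add_one_succ, qFactorial_succ,
    qDescFactorial_succ, hsplit]
  field_simp

end QFactorials

section IntervalProducts

variable {M : Type*} [CommMonoid M] (f : ℕ → M)

lemma prod_Ioc_succ_succ (k l : ℕ) :
    ∏ i ∈ Ioc (k + 1) (l + 1), f i = ∏ i ∈ Ioc k l, f (i + 1) := by
  rw [← map_add_right_Ioc, prod_map]
  rfl

lemma prod_Ioc_succ_bot {k l : ℕ} (h : k < l) :
    ∏ i ∈ Ioc k l, f i = f (k + 1) * ∏ i ∈ Ioc (k + 1) l, f i := by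
  rw [← prod_Ioc_consecutive f (Nat.le_succ k) h, Nat.Ioc_succ_singleton, prod_singleton]

lemma mul_prod_Ioc_succ {k l : ℕ} (h : k ≤ l) :
    f (k + 1) * ∏ i ∈ Ioc k l, f (i + 1) = (∏ i ∈ Ioc k l, f i) * f (l + 1) := by
  rw [← prod_Ioc_succ_succ, ← prod_Ioc_succ_bot f (Nat.lt_succ_of_le h), prod_Ioc_succ_top h]

lemma prod_Icc_one_mul_prod_Ioc {k l : ℕ} (h : k ≤ l) :
    (∏ i ∈ Icc 1 k, f i) * ∏ i ∈ Ioc k l, f i = ∏ i ∈ Icc 1 l, f i := by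
  have hIcc (n : ℕ) : Icc 1 n = Ioc 0 n := Icc_add_one_left_eq_Ioc 0 n
  rw [hIcc, hIcc, prod_Ioc_consecutive f (Nat.zero_le k) h]

end IntervalProducts

-- The `k`-th term of the q-Chu–Vandermonde sum, multiplied by `[b+1]_q ⋯ [b+l]_q`.
noncomputable def qChuTerm (q a b : ℂ) (l k : ℕ) : ℂ :=
  (-1) ^ k * qpow q (k * (b - a + l - 1)) * qChoose q l k * qAscFactorial q (a + 1) k *
    ∏ i ∈ Ioc k l, qnum q (b + i)

section QChuVandermonde

variable (q : ℂ)

lemma qChuTerm_succ_zero (a b : ℂ) (l : ℕ) :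
    qChuTerm q a b (l + 1) 0 = qnum q (b + l + 1) * qChuTerm q a b l 0 := by
  simp [qChuTerm, qChoose_zero, qAscFactorial, qpow_zero, prod_Ioc_succ_top (Nat.zero_le l),
    add_assoc, mul_comm]

lemma qChuTerm_self_succ (a b : ℂ) (l : ℕ) : qChuTerm q a b l (l + 1) = 0 := by
  simp [qChuTerm, qChoose_self_succ]

lemma qChuTerm_succ_succ {k l : ℕ} (hk : qnum q (k + 1) ≠ 0) (hkl : k ≤ l) (a b : ℂ) :
    qChuTerm q a b (l + 1) (k + 1) =
      qnum q (b + l + 1) *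
          (qChuTerm q a b l (k + 1) - qpow q (2 * (b - a + l)) * qChuTerm q a b l k)
        + qpow q (2 * (b - a + l) + a + 1) * qnum q (b - a) * qChuTerm q a (b + 1) l k := by
  have hpascal := qChoose_succ_succ q hk l
  rw [← Nat.cast_succ] at hpascal
  have htop : qChoose q l (k + 1) * ∏ i ∈ Ioc (k + 1) (l + 1), qnum q (b + i) =
      qChoose q l (k + 1) * ((∏ i ∈ Ioc (k + 1) l, qnum q (b + i)) * qnum q (b + l + 1)) := by
    rcases hkl.lt_or_eq with hlt | rfl
    · rw [prod_Ioc_succ_top hlt, Nat.cast_succ, add_assoc]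
    · rw [qChoose_self_succ, zero_mul, zero_mul]
  have hshift : ∏ i ∈ Ioc (k + 1) (l + 1), qnum q (b + i) =
      ∏ i ∈ Ioc k l, qnum q (b + 1 + i) := by
    rw [prod_Ioc_succ_succ]
    exact prod_congr rfl fun i _ => by push_cast; ring_nf
  have hbot : qnum q (b + k + 1) * ∏ i ∈ Ioc k l, qnum q (b + 1 + i) =
      (∏ i ∈ Ioc k l, qnum q (b + i)) * qnum q (b + l + 1) := by
    have h := mul_prod_Ioc_succ (fun i : ℕ => qnum q (b + i)) hkl
    push_cast [← add_assoc] at h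
    rw [← h]
    exact congrArg _ (prod_congr rfl fun i _ => by rw [add_right_comm])
  have hasc : qAscFactorial q (a + 1) (k + 1) =
      qAscFactorial q (a + 1) k * qnum q (a + 1 + k) :=
    prod_range_succ _ _
  have hsplit : qnum q (a + 1 + k) =
      qpow q (b - a) * qnum q (b + k + 1) - qpow q (b + k + 1) * qnum q (b - a) := by
    rw [← qnum_sub]
    ring_nf
  have e₁ : qpow q ((k + 1 : ℕ) * (b - a + (l + 1 : ℕ) - 1)) * qpow q (-(k + 1)) =
      qpow q ((k + 1 : ℕ) * (b - a + l - 1)) :=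
    qpow_mul_qpow_of_add_eq q (by push_cast; ring)
  have e₂ : qpow q ((k + 1 : ℕ) * (b - a + (l + 1 : ℕ) - 1)) * qpow q (l - k) * qpow q (b - a) =
      qpow q (2 * (b - a + l)) * qpow q (k * (b - a + l - 1)) := by
    simp only [← qpow_add]
    push_cast; ring_nf
  have e₃ : qpow q ((k + 1 : ℕ) * (b - a + (l + 1 : ℕ) - 1)) * qpow q (l - k) *
        qpow q (b + k + 1) =
      qpow q (2 * (b - a + l) + a + 1) * qpow q (k * (b + 1 - a + l - 1)) := by
    simp only [← qpow_add]
    push_cast; ring_nf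
  unfold qChuTerm
  rw [hpascal, hasc]
  set σ : ℂ := (-1) ^ (k + 1)
  set Q := qpow q ((k + 1 : ℕ) * (b - a + (l + 1 : ℕ) - 1))
  set C₀ := qChoose q l k
  set C₁ := qChoose q l (k + 1)
  set P := qAscFactorial q (a + 1) k
  set S := qnum q (a + 1 + k)
  set N := ∏ i ∈ Ioc (k + 1) (l + 1), qnum q (b + i)
  set N₀ := ∏ i ∈ Ioc k l, qnum q (b + i)
  set N₁ := ∏ i ∈ Ioc k l, qnum q (b + 1 + i)
  -- The `C₁` half of Pascal's rule is the shifted term; in the `C₀` half the new factor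
  -- `S = [a+1+k]` is split by `hsplit` into a `[b+k+1]` part, absorbed by `hbot`, and a `[b-a]` part.
  linear_combination σ * P * S * C₁ * N * e₁ + σ * P * S * qpow q ((k + 1 : ℕ) * (b - a + l - 1)) * htop
    + σ * Q * qpow q (l - k) * C₀ * P * S * hshift + σ * Q * qpow q (l - k) * C₀ * P * N₁ * hsplit
    + σ * Q * qpow q (l - k) * C₀ * P * qpow q (b - a) * hbot
    + σ * C₀ * P * N₀ * qnum q (b + l + 1) * e₂ - σ * C₀ * P * qnum q (b - a) * N₁ * e₃

lemma sum_qChuTerm_succ (hq : ∀ n : ℕ, qnum q (n + 1) ≠ 0) (a b : ℂ) (l : ℕ) :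
    ∑ k ∈ range (l + 2), qChuTerm q a b (l + 1) k =
      (1 - qpow q (2 * (b - a + l))) * qnum q (b + l + 1) *
          ∑ k ∈ range (l + 1), qChuTerm q a b l k
        + qpow q (2 * (b - a + l) + a + 1) * qnum q (b - a) *
          ∑ k ∈ range (l + 1), qChuTerm q a (b + 1) l k := by
  have hshift : ∑ k ∈ range (l + 1), qChuTerm q a b l (k + 1) =
      ∑ k ∈ range (l + 1), qChuTerm q a b l k - qChuTerm q a b l 0 := by
    rw [eq_sub_iff_add_eq, ← sum_range_succ', sum_range_succ, qChuTerm_self_succ, add_zero]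
  rw [sum_range_succ', sum_congr rfl fun k hk => qChuTerm_succ_succ q (hq k)
    (Nat.lt_succ_iff.mp (mem_range.mp hk)) a b, qChuTerm_succ_zero, sum_add_distrib,
    ← mul_sum, ← mul_sum, sum_sub_distrib, ← mul_sum, hshift]
  ring

theorem sum_qChuTerm (hq : ∀ n : ℕ, qnum q (n + 1) ≠ 0) (a : ℂ) (l : ℕ) (b : ℂ) :
    ∑ k ∈ range (l + 1), qChuTerm q a b l k =
      qpow q (-(l * (a + 1))) * qDescFactorial q (b - a + l - 1) l := by
  induction l generalizing b with
  | zero => simp [qChuTerm, qChoose_zero, qAscFactorial, qDescFactorial, qpow_zero]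
  | succ l ih =>
    rw [sum_qChuTerm_succ q hq, ih, ih]
    have d₁ : qDescFactorial q (b - a + (l + 1 : ℕ) - 1) (l + 1) =
        qnum q (b - a + l) * qDescFactorial q (b - a + l - 1) l := by
      rw [show b - a + ((l + 1 : ℕ) : ℂ) - 1 = b - a + l - 1 + 1 by push_cast; ring,
        qDescFactorial_add_one_succ, sub_add_cancel]
    have d₂ : qDescFactorial q (b - a + (l + 1 : ℕ) - 1) (l + 1) =
        qDescFactorial q (b + 1 - a + l - 1) l * qnum q (b - a) := by
      rw [qDescFactorial_succ,
        show b - a + ((l + 1 : ℕ) : ℂ) - 1 = b + 1 - a + l - 1 by push_cast; ring]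
      ring_nf
    have e : qpow q (-((l + 1 : ℕ) * (a + 1))) = qpow q (-(l * (a + 1))) * qpow q (-(a + 1)) :=
      (qpow_mul_qpow_of_add_eq q (by push_cast; ring)).symm
    have key := qpow_neg_mul_qnum q (b - a + l) (a + 1)
    rw [show b - a + l + (a + 1) = b + l + 1 by ring,
      show 2 * (b - a + l) + (a + 1) = 2 * (b - a + l) + a + 1 by ring] at key
    set X := qpow q (-(l * (a + 1)))
    set Q := qpow q (2 * (b - a + l) + a + 1)
    linear_combination (-qDescFactorial q (b - a + (l + 1 : ℕ) - 1) (l + 1)) * e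
      + (X * Q - X * qpow q (-(a + 1))) * d₁ - X * Q * d₂
      - X * qDescFactorial q (b - a + l - 1) l * key

theorem qChuVandermonde (hq : ∀ n : ℕ, qnum q (n + 1) ≠ 0) (a b : ℂ) (l : ℕ)
    (hb : ∏ i ∈ Icc 1 l, qnum q (b + i) ≠ 0) :
    ∑ k ∈ range (l + 1), (-1) ^ k * qpow q (k * (b - a + l - 1)) /
        (qFactorial q k * ∏ i ∈ Icc 1 k, qnum q (b + i)) *
          (qDescFactorial q l k * qAscFactorial q (a + 1) k) =
      qpow q (-(l * (a + 1))) * qDescFactorial q (b - a + l - 1) l /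
        ∏ i ∈ Icc 1 l, qnum q (b + i) := by
  rw [← sum_qChuTerm q hq, eq_div_iff hb, sum_mul]
  refine sum_congr rfl fun k hk => ?_
  rw [← prod_Icc_one_mul_prod_Ioc _ (Nat.lt_succ_iff.mp (mem_range.mp hk))] at hb ⊢
  have := qFactorial_ne_zero q hq k
  have := left_ne_zero_of_mul hb
  rw [qChuTerm, qChoose]
  field_simp

end QChuVandermonde

section Ladder

variable {R M : Type*} [CommSemiring R] [AddCommMonoid M] [Module R M] {v : ℕ → M}

lemma pow_apply_of_apply_eq_succ {F : Module.End R M} (hF : ∀ n, F (v n) = v (n + 1)) (n k : ℕ) :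
    (F ^ k) (v n) = v (n + k) := by
  induction k with
  | zero => rfl
  | succ k ih => rw [pow_succ', Module.End.mul_apply, ih, hF, add_assoc]

lemma pow_apply_add_of_apply_succ_eq_smul {E : Module.End R M} {e : ℕ → R}
    (hE : ∀ n, E (v (n + 1)) = e n • v n) (n k : ℕ) :
    (E ^ k) (v (n + k)) = (∏ j ∈ range k, e (n + j)) • v n := by
  induction k with
  | zero => simp
  | succ k ih =>
    rw [pow_succ, Module.End.mul_apply, ← add_assoc, hE, map_smul, ih, smul_smul,
      prod_range_succ, mul_comm]

lemma pow_apply_eq_zero_of_lt {E : Module.End R M} {e : ℕ → R} (hE0 : E (v 0) = 0)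
    (hE : ∀ n, E (v (n + 1)) = e n • v n) {k l : ℕ} (h : l < k) : (E ^ k) (v l) = 0 := by
  obtain ⟨j, rfl⟩ := Nat.exists_eq_add_of_lt h
  have hl := pow_apply_add_of_apply_succ_eq_smul hE 0 l
  rw [zero_add] at hl
  rw [show l + j + 1 = j + 1 + l by omega, pow_add, Module.End.mul_apply, hl, map_smul, pow_succ,
    Module.End.mul_apply, hE0, map_zero, smul_zero]

end Ladder

lemma pow_apply_pow_apply_eq_smul (q : ℂ) {M : Type*} [AddCommMonoid M] [Module ℂ M] {v : ℕ → M}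
    {E F : Module.End ℂ M} (lam : ℂ) (hF : ∀ n, F (v n) = v (n + 1))
    (hE : ∀ n : ℕ, E (v (n + 1)) = (qnum q (n + 1) * qnum q (lam - n)) • v n) {k l : ℕ}
    (hk : k ≤ l) :
    (F ^ k) ((E ^ k) (v l)) = (qDescFactorial q l k * qAscFactorial q (lam - l + 1) k) • v l := by
  obtain ⟨n, rfl⟩ := Nat.exists_eq_add_of_le' hk
  rw [pow_apply_add_of_apply_succ_eq_smul hE, map_smul, pow_apply_of_apply_eq_succ hF,
    prod_mul_distrib]
  congr 2
  · calc _ = qAscFactorial q (n + 1) k := prod_congr rfl fun j _ => by push_cast; ring_nf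
      _ = _ := by rw [qAscFactorial_eq_qDescFactorial]; push_cast; ring_nf
  · calc _ = qDescFactorial q (lam - n) k := prod_congr rfl fun j _ => by push_cast; ring_nf
      _ = _ := by rw [qAscFactorial_eq_qDescFactorial]; push_cast; ring_nf

theorem truncated_projector_eigenvalue_general (q lam s : ℂ) (hq0 : q ≠ 0)
    (hq : ∀ n : ℕ, 0 < n → q ^ n ≠ 1)
    (M : Type*) [AddCommGroup M] [Module ℂ M]
    (v : ℕ → M)
    (E F : M →ₗ[ℂ] M)
    (hF : ∀ n : ℕ, F (v n) = v (n + 1))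
    (hE0 : E (v 0) = 0)
    (hE : ∀ n : ℕ, E (v (n + 1)) = (qnum q (n + 1) * qnum q (lam - n)) • v n)
    (l m : ℕ) (hlm : l ≤ m)
    (hden : ∀ i : ℕ, 1 ≤ i → i ≤ l → qnum q ((lam - 2 * l) + s + i) ≠ 0) :
    (∑ k ∈ Finset.range (m + 1),
        (((-1 : ℂ) ^ k * qpow q (k * (s - 1))) /
            ((∏ i ∈ Finset.Icc 1 k, qnum q i) *
             (∏ i ∈ Finset.Icc 1 k, qnum q ((lam - 2 * l) + s + i)))) •
          ((F ^ k) ((E ^ k) (v l))))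
      = (qpow q (-(l : ℂ) * (lam - 2 * l) - l * (l + 1)) *
          ∏ k ∈ Finset.Icc 1 l, (qnum q (s - k) / qnum q (s + (lam - 2 * l) + k))) • v l
    ∧ qpow q (-(l : ℂ) * (lam - 2 * l) - l * (l + 1)) ≠ 0 := by
  refine ⟨?_, Complex.exp_ne_zero _⟩
  have hq' (n : ℕ) : qnum q (n + 1) ≠ 0 := by
    exact_mod_cast qnum_natCast_ne_zero q hq0 hq n.succ_pos
  have hD : ∏ i ∈ Icc 1 l, qnum q (lam - 2 * l + s + i) ≠ 0 :=
    prod_ne_zero_iff.mpr fun i hi => hden i (mem_Icc.1 hi).1 (mem_Icc.1 hi).2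
  have hchu := qChuVandermonde q hq' (lam - l) (lam - 2 * l + s) l hD
  rw [show lam - 2 * l + s - (lam - l) + l - 1 = s - 1 by ring] at hchu
  simp only [qFactorial] at hchu
  rw [← sum_subset (range_subset_range.2 (by omega : l + 1 ≤ m + 1)) fun k _ hk => by
      rw [pow_apply_eq_zero_of_lt hE0 hE (by simpa using hk), map_zero, smul_zero],
    sum_congr rfl fun k hk => by
      rw [pow_apply_pow_apply_eq_smul q lam hF hE (Nat.lt_succ_iff.mp (mem_range.mp hk)),
        smul_smul],
    ← sum_smul, hchu, prod_div_distrib, ← qDescFactorial_sub_one, mul_div_assoc]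
  congr 4
  · ring
  · ext i
    ring_nf

/-- on a highest weight `U_q(sl₂)`-module of highest weight `λ`
(modeled with weight basis `v l` of weight `η = λ - 2l`, `F v_l = v_{l+1}`,
`E v_{l+1} = [l+1]_q [λ-l]_q v_l`), the truncated extremal projector
`p_m(s) = Σ_{k=0}^m f^k e^k (-1)^k q^{k(s-1)}/([k]_q! ∏_{i=1}^k [h+s+i]_q)`
acts on `v l` (for `l ≤ m`) by the scalar
`c ∏_{k=1}^l [s-k]_q/[s+η+k]_q` with `c = q^{-lη - l(l+1)} ≠ 0`,
provided the Cartan denominators `[η+s+i]_q`, `1 ≤ i ≤ l`, are nonzero. -/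
theorem truncated_projector_eigenvalue (q lam s : ℂ) (hq0 : q ≠ 0)
    (hq : ∀ n : ℕ, 0 < n → q ^ n ≠ 1)
    (M : Type*) [AddCommGroup M] [Module ℂ M]
    (v : ℕ → M) (hv : LinearIndependent ℂ v)
    (E F : M →ₗ[ℂ] M)
    (hF : ∀ n : ℕ, F (v n) = v (n + 1))
    (hE0 : E (v 0) = 0)
    (hE : ∀ n : ℕ, E (v (n + 1)) = (qnum q (n + 1) * qnum q (lam - n)) • v n)
    (l m : ℕ) (hlm : l ≤ m)
    (hden : ∀ i : ℕ, 1 ≤ i → i ≤ l → qnum q ((lam - 2 * l) + s + i) ≠ 0) :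
    (∑ k ∈ Finset.range (m + 1),
        (((-1 : ℂ) ^ k * qpow q (k * (s - 1))) /
            ((∏ i ∈ Finset.Icc 1 k, qnum q i) *
             (∏ i ∈ Finset.Icc 1 k, qnum q ((lam - 2 * l) + s + i)))) •
          ((F ^ k) ((E ^ k) (v l))))
      = (qpow q (-(l : ℂ) * (lam - 2 * l) - l * (l + 1)) *
          ∏ k ∈ Finset.Icc 1 l, (qnum q (s - k) / qnum q (s + (lam - 2 * l) + k))) • v l
    ∧ qpow q (-(l : ℂ) * (lam - 2 * l) - l * (l + 1)) ≠ 0 :=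
  truncated_projector_eigenvalue_general q lam s hq0 hq M v E F hF hE0 hE l m hlm hden
end

section
/- Let V be a U_q(sl₂)-module, μ a weight, and suppose e^{m+1} kills V[μ]. If [(μ,α)+i]_q ≠ 0 for i = 0,…,m+1, then the truncated projector p_m(1) maps V[μ] into ker e. -/
section Aux
variable {q : ℂ}

lemma aux_exp_nat (hq0 : q ≠ 0) (i : ℕ) :
    Complex.exp ((i : ℂ) * Complex.log q) = q ^ i := by
  rw [Complex.exp_nat_mul, Complex.exp_log hq0]

lemma qnum_natCast (hq0 : q ≠ 0) (i : ℕ) :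
    qnum q (i : ℂ) = (q ^ i - q⁻¹ ^ i) / (q - q⁻¹) := by
  unfold qnum
  rw [neg_mul, Complex.exp_neg, aux_exp_nat hq0, ← inv_pow]

lemma aux_t_ne (hq : ∀ n : ℕ, 0 < n → q ^ n ≠ 1) (hq0 : q ≠ 0) : q - q⁻¹ ≠ 0 := by
  intro h
  apply hq 2 (by norm_num)
  have e : q = q⁻¹ := sub_eq_zero.mp h
  have h2 : q ^ 2 = q * q⁻¹ := by rw [sq]; nth_rewrite 2 [e]; rfl
  rw [h2, mul_inv_cancel₀ hq0]

lemma qnum_nat_ne (hq : ∀ n : ℕ, 0 < n → q ^ n ≠ 1) (hq0 : q ≠ 0) (i : ℕ) (hi : 0 < i) :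
    qnum q (i : ℂ) ≠ 0 := by
  rw [qnum_natCast hq0]
  apply div_ne_zero _ (aux_t_ne hq hq0)
  intro h
  have e : q ^ i = q⁻¹ ^ i := sub_eq_zero.mp h
  apply hq (2 * i) (by omega)
  calc q ^ (2 * i) = q ^ i * q ^ i := by rw [two_mul, pow_add]
    _ = q ^ i * q⁻¹ ^ i := by rw [e]
    _ = 1 := by rw [← mul_pow, mul_inv_cancel₀ hq0, one_pow]

lemma qnum_add_nat (hq0 : q ≠ 0) (x : ℂ) (i : ℕ) :
    qnum q (x + i) = (Complex.exp (x * Complex.log q) * q ^ i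
      - (Complex.exp (x * Complex.log q))⁻¹ * q⁻¹ ^ i) / (q - q⁻¹) := by
  unfold qnum
  rw [neg_mul, Complex.exp_neg, add_mul, Complex.exp_add, aux_exp_nat hq0, mul_inv, ← inv_pow]

lemma scal1 (q lam : ℂ) (n : ℕ) (hq0 : q ≠ 0) :
    (q - q⁻¹) * (lam - lam⁻¹) +
      (q ^ (n+1) - q⁻¹ ^ (n+1)) * (q⁻¹ ^ n * (q⁻¹ ^ 2 * lam) - q ^ n * (q ^ 2 * lam⁻¹))
    = (q ^ (n+2) - q⁻¹ ^ (n+2)) * (q⁻¹ ^ (n+1) * lam - q ^ (n+1) * lam⁻¹) := by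
  have h1 : q * q⁻¹ = 1 := mul_inv_cancel₀ hq0
  have h2 : q ^ n * q⁻¹ ^ n = 1 := by rw [← mul_pow, h1, one_pow]
  linear_combination (-(q - q⁻¹) * (lam - lam⁻¹)) * h1 +
    (-(q - q⁻¹) * (lam - lam⁻¹) * q * q⁻¹) * h2

lemma scal2 (q lam : ℂ) (n : ℕ) (hq0 : q ≠ 0) (ht : q - q⁻¹ ≠ 0) :
    (q ^ (n+1) - q⁻¹ ^ (n+1)) * (q - q⁻¹)⁻¹ * (q - q⁻¹)⁻¹ *
        (q⁻¹ ^ n * (q⁻¹ ^ 2 * lam) - q ^ n * (q⁻¹ ^ 2 * lam)⁻¹)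
      + (q - q⁻¹)⁻¹ * (lam - lam⁻¹)
    = (q ^ (n+2) - q⁻¹ ^ (n+2)) * (q - q⁻¹)⁻¹ * (q - q⁻¹)⁻¹ *
        (q⁻¹ ^ (n+1) * lam - q ^ (n+1) * lam⁻¹) := by
  have hinv : (q⁻¹ ^ 2 * lam)⁻¹ = q ^ 2 * lam⁻¹ := by
    rw [mul_inv, inv_pow, inv_inv]
  rw [hinv]
  have h1 := scal1 q lam n hq0
  have htt : (q - q⁻¹) * (q - q⁻¹)⁻¹ = 1 := mul_inv_cancel₀ ht
  linear_combination ((q - q⁻¹)⁻¹ * (q - q⁻¹)⁻¹) * h1 +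
    (-(q - q⁻¹)⁻¹ * (lam - lam⁻¹)) * htt

lemma scal3 (q Z : ℂ) (k : ℕ) (hq0 : q ≠ 0) :
    (q ^ (k+1) - q⁻¹ ^ (k+1)) * (q - q⁻¹)⁻¹ * (q - q⁻¹)⁻¹ *
        (q⁻¹ ^ k * (q ^ (2*(k+1)) * Z) - q ^ k * (q⁻¹ ^ (2*(k+1)) * Z⁻¹))
    = ((q ^ (k+1) - q⁻¹ ^ (k+1)) / (q - q⁻¹)) *
        ((Z * q ^ (k+2) - Z⁻¹ * q⁻¹ ^ (k+2)) / (q - q⁻¹)) := by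
  have h2 : q ^ k * q⁻¹ ^ k = 1 := by
    rw [← mul_pow, mul_inv_cancel₀ hq0, one_pow]
  linear_combination ((q - q⁻¹)⁻¹ * (q - q⁻¹)⁻¹ * (q ^ (k+1) - q⁻¹ ^ (k+1)) *
    (Z * q ^ (k+2) - Z⁻¹ * q⁻¹ ^ (k+2))) * h2

end Aux

/-- let `V` be a `U_q(sl₂)`-module (operators `E, F, K, K⁻¹` with the
standard relations), `w` a vector of weight `μ` (i.e. `K w = q^{(μ,α)} w`) with
`E^{m+1} w = 0`.  If `[(μ,α)+i]_q ≠ 0` for `i = 0, …, m+1`, then the truncated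
projector `p_m(1)` maps `w` into `ker E`. -/
theorem truncated_projector_kills (q a : ℂ) (hq0 : q ≠ 0)
    (hq : ∀ n : ℕ, 0 < n → q ^ n ≠ 1)
    (M : Type*) [AddCommGroup M] [Module ℂ M]
    (E F K K' : Module.End ℂ M)
    (hKK' : K * K' = 1) (hK'K : K' * K = 1)
    (hKE : K * E = (q ^ 2) • (E * K))
    (hKF : K * F = (q⁻¹ ^ 2) • (F * K))
    (hEF : E * F - F * E = ((q - q⁻¹)⁻¹) • (K - K'))
    (w : M) (hw : K w = (Complex.exp (a * Complex.log q)) • w)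
    (m : ℕ) (hnil : (E ^ (m + 1)) w = 0)
    (hden : ∀ i : ℕ, i ≤ m + 1 → qnum q (a + i) ≠ 0) :
    E (∑ k ∈ Finset.range (m + 1),
        (((-1 : ℂ) ^ k) /
            ((∏ i ∈ Finset.Icc 1 k, qnum q i) *
             (∏ i ∈ Finset.Icc 1 k, qnum q (a + 1 + i)))) •
          ((F ^ k) ((E ^ k) w))) = 0 := by
  have ht : q - q⁻¹ ≠ 0 := aux_t_ne hq hq0
  set Z : ℂ := Complex.exp (a * Complex.log q) with hZ
  have hZ0 : Z ≠ 0 := Complex.exp_ne_zero _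
  -- K' acts on K-eigenvectors
  have hK'v : ∀ (v : M) (lam : ℂ), lam ≠ 0 → K v = lam • v → K' v = lam⁻¹ • v := by
    intro v lam hl hKv
    have h1 : K' (K v) = v := by
      rw [← Module.End.mul_apply, hK'K, Module.End.one_apply]
    rw [hKv, map_smul] at h1
    calc K' v = lam⁻¹ • (lam • K' v) := by rw [smul_smul, inv_mul_cancel₀ hl, one_smul]
      _ = lam⁻¹ • v := by rw [h1]
  -- basic commutation on an eigenvector
  have hEF1 : ∀ (v : M) (lam : ℂ), lam ≠ 0 → K v = lam • v →
      E (F v) = F (E v) + ((q - q⁻¹)⁻¹ * (lam - lam⁻¹)) • v := by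
    intro v lam hl hKv
    have h0 := congrArg (fun T : Module.End ℂ M => T v) hEF
    simp only [LinearMap.sub_apply, Module.End.mul_apply, LinearMap.smul_apply] at h0
    rw [hKv, hK'v v lam hl hKv] at h0
    have h2 : E (F v) = F (E v) + (q - q⁻¹)⁻¹ • (lam • v - lam⁻¹ • v) := by
      rw [← h0]; abel
    rw [h2, smul_sub, smul_smul, smul_smul, ← sub_smul, ← mul_sub]
  -- weight of F v
  have hKF1 : ∀ (v : M) (lam : ℂ), K v = lam • v → K (F v) = (q⁻¹ ^ 2 * lam) • F v := by
    intro v lam hKv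
    have h0 := congrArg (fun T : Module.End ℂ M => T v) hKF
    simp only [Module.End.mul_apply, LinearMap.smul_apply] at h0
    rw [hKv, map_smul, smul_smul] at h0
    exact h0
  -- the key commutation formula  E ∘ F^{n+1}  on an eigenvector
  have key : ∀ (n : ℕ) (v : M) (lam : ℂ), lam ≠ 0 → K v = lam • v →
      E ((F ^ (n+1)) v) = (F ^ (n+1)) (E v) +
        ((q ^ (n+1) - q⁻¹ ^ (n+1)) * (q - q⁻¹)⁻¹ * (q - q⁻¹)⁻¹ *
          (q⁻¹ ^ n * lam - q ^ n * lam⁻¹)) • (F ^ n) v := by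
    intro n
    induction n with
    | zero =>
      intro v lam hl hKv
      simp only [zero_add, pow_one, pow_zero, Module.End.one_apply, one_mul]
      rw [hEF1 v lam hl hKv]
      congr 2
      have htt : (q - q⁻¹) * (q - q⁻¹)⁻¹ = 1 := mul_inv_cancel₀ ht
      linear_combination (-(q - q⁻¹)⁻¹ * (lam - lam⁻¹)) * htt
    | succ n ih =>
      intro v lam hl hKv
      have hl2 : q⁻¹ ^ 2 * lam ≠ 0 := by
        exact mul_ne_zero (pow_ne_zero _ (inv_ne_zero hq0)) hl
      have h1 := ih (F v) (q⁻¹ ^ 2 * lam) hl2 (hKF1 v lam hKv)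
      have e1 : (F ^ (n+1+1)) v = (F ^ (n+1)) (F v) := by
        rw [pow_succ F (n+1), Module.End.mul_apply]
      have e2 : (F ^ (n+1)) v = (F ^ n) (F v) := by
        rw [pow_succ F n, Module.End.mul_apply]
      have e3 : (F ^ (n+1+1)) (E v) = (F ^ (n+1)) (F (E v)) := by
        rw [pow_succ F (n+1), Module.End.mul_apply]
      rw [e1, h1, hEF1 v lam hl hKv, map_add, map_smul, ← e3, ← e2,
        add_assoc, ← add_smul]
      congr 2
      linear_combination scal2 q lam n hq0 ht
  -- weights of E^k w
  have hKpow : ∀ k : ℕ, K ((E ^ k) w) = (q ^ (2*k) * Z) • (E ^ k) w := by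
    intro k
    induction k with
    | zero =>
      simpa using hw
    | succ k ih =>
      have e1 : (E ^ (k+1)) w = E ((E ^ k) w) := by
        rw [pow_succ', Module.End.mul_apply]
      rw [e1]
      have h0 := congrArg (fun T : Module.End ℂ M => T ((E ^ k) w)) hKE
      simp only [Module.End.mul_apply, LinearMap.smul_apply] at h0
      rw [ih, map_smul, smul_smul] at h0
      rw [h0]
      congr 1
      ring
  -- the one-step computation
  have hstep : ∀ k : ℕ, E ((F ^ (k+1)) ((E ^ (k+1)) w)) =
      (F ^ (k+1)) ((E ^ (k+2)) w) +
        (qnum q ((k+1 : ℕ) : ℂ) * qnum q (a + ((k+2 : ℕ) : ℂ))) • (F ^ k) ((E ^ (k+1)) w) := by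
    intro k
    have hlam : q ^ (2*(k+1)) * Z ≠ 0 := mul_ne_zero (pow_ne_zero _ hq0) hZ0
    have h1 := key k ((E ^ (k+1)) w) (q ^ (2*(k+1)) * Z) hlam (hKpow (k+1))
    have e1 : E ((E ^ (k+1)) w) = (E ^ (k+2)) w := by
      rw [pow_succ' E (k+1), Module.End.mul_apply]
    rw [h1, e1]
    congr 2
    rw [qnum_natCast hq0, qnum_add_nat hq0, ← hZ]
    have hinv : (q ^ (2*(k+1)) * Z)⁻¹ = q⁻¹ ^ (2*(k+1)) * Z⁻¹ := by
      rw [mul_inv, ← inv_pow]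
    rw [hinv]
    exact scal3 q Z k hq0
  -- coefficients
  set c : ℕ → ℂ := fun k => ((-1 : ℂ) ^ k) /
      ((∏ i ∈ Finset.Icc 1 k, qnum q i) *
       (∏ i ∈ Finset.Icc 1 k, qnum q (a + 1 + i))) with hc
  have hPne : ∀ k : ℕ, (∏ i ∈ Finset.Icc 1 k, qnum q (i : ℂ)) ≠ 0 := by
    intro k
    apply Finset.prod_ne_zero_iff.mpr
    intro i hi
    exact qnum_nat_ne hq hq0 i (Finset.mem_Icc.mp hi).1
  have hRne : ∀ k : ℕ, k ≤ m → (∏ i ∈ Finset.Icc 1 k, qnum q (a + 1 + (i : ℂ))) ≠ 0 := by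
    intro k hk
    apply Finset.prod_ne_zero_iff.mpr
    intro i hi
    obtain ⟨hi1, hi2⟩ := Finset.mem_Icc.mp hi
    have e : a + 1 + (i : ℂ) = a + ((i + 1 : ℕ) : ℂ) := by push_cast; ring
    rw [e]
    exact hden (i + 1) (by omega)
  have hkey : ∀ j : ℕ, j + 1 ≤ m →
      c (j+1) * (qnum q ((j+1 : ℕ) : ℂ) * qnum q (a + ((j+2 : ℕ) : ℂ))) = - c j := by
    intro j hj
    have hP := Finset.prod_Icc_succ_top (f := fun i : ℕ => qnum q (i : ℂ)) (by omega : 1 ≤ j + 1)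
    have hR := Finset.prod_Icc_succ_top (f := fun i : ℕ => qnum q (a + 1 + (i : ℂ))) (by omega : 1 ≤ j + 1)
    have eD : a + 1 + ((j + 1 : ℕ) : ℂ) = a + ((j + 2 : ℕ) : ℂ) := by push_cast; ring
    have hB : qnum q ((j+1 : ℕ) : ℂ) ≠ 0 := qnum_nat_ne hq hq0 (j+1) (by omega)
    have hD : qnum q (a + ((j + 2 : ℕ) : ℂ)) ≠ 0 := hden (j+2) (by omega)
    have hPj := hPne j
    have hRj := hRne j (by omega)
    rw [hc]
    simp only []
    rw [hP, hR, eD, pow_succ]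
    set Pj := ∏ i ∈ Finset.Icc 1 j, qnum q (i : ℂ) with hPj_def
    set Rj := ∏ i ∈ Finset.Icc 1 j, qnum q (a + 1 + (i : ℂ)) with hRj_def
    set B := qnum q ((j + 1 : ℕ) : ℂ) with hB_def
    set D := qnum q (a + ((j + 2 : ℕ) : ℂ)) with hD_def
    field_simp
  -- telescoping
  let u : ℕ → M := fun k => Nat.casesOn k 0 (fun j => c j • (F ^ j) ((E ^ (j+1)) w))
  have hterm : ∀ k ∈ Finset.range (m + 1),
      E (c k • (F ^ k) ((E ^ k) w)) = u (k+1) - u k := by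
    intro k hk
    have hkm : k ≤ m := by
      have := Finset.mem_range.mp hk; omega
    rw [map_smul]
    cases k with
    | zero =>
      show c 0 • E ((F ^ 0) ((E ^ 0) w)) = c 0 • (F ^ 0) ((E ^ 1) w) - 0
      simp only [pow_zero, pow_one, Module.End.one_apply, sub_zero]
    | succ j =>
      show c (j+1) • E ((F ^ (j+1)) ((E ^ (j+1)) w)) =
        c (j+1) • (F ^ (j+1)) ((E ^ (j+2)) w) - c j • (F ^ j) ((E ^ (j+1)) w)
      rw [hstep j, smul_add, smul_smul, hkey j hkm, neg_smul, sub_eq_add_neg]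
  rw [show (∑ k ∈ Finset.range (m + 1),
        (((-1 : ℂ) ^ k) /
            ((∏ i ∈ Finset.Icc 1 k, qnum q i) *
             (∏ i ∈ Finset.Icc 1 k, qnum q (a + 1 + i)))) •
          ((F ^ k) ((E ^ k) w))) =
      ∑ k ∈ Finset.range (m + 1), c k • (F ^ k) ((E ^ k) w) from rfl]
  rw [map_sum, Finset.sum_congr rfl hterm, Finset.sum_range_sub u (m+1)]
  show c m • (F ^ m) ((E ^ (m+1)) w) - 0 = 0
  rw [hnil, map_zero, smul_zero, sub_zero]
end

section
/- Let V be an irreducible highest weight U_q(g)-module with nondegenerate contravariant form, J⁺ ⊂ U_q(g_+) a graded left ideal, and V^{J⁺} = {v ∈ V : J⁺ v = 0}. Then with respect to the contravariant form on V, the orthogonal complement of V^{J⁺} is ω(J⁺)V, and the form induces a nondegenerate pairing between V^{J⁺} and V/ω(J⁺)V. -/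
/-!
By contravariance, `v` is killed by `J` exactly when `v` is orthogonal to `N = ω(J)V`
(nondegeneracy gives the converse), so the claim is that `N` is its own double orthogonal.
Because `J` is graded and `ω` reverses degrees, `N` is a graded subspace. Distinct weight spaces
are orthogonal, so the form stays nondegenerate on each (finite-dimensional) weight space, where
the double orthogonal of `N ∩ W μ` is `N ∩ W μ` by a dimension count.
-/

open DirectSum

section Decomposition

variable {ι M σ : Type*} [DecidableEq ι] [AddCommMonoid M] [SetLike σ M] [AddSubmonoidClass σ M]
  (ℳ : ι → σ) [Decomposition ℳ]

theorem DirectSum.map_decompose_of_mapsTo (f : M →+ M) {e : ι → ι} (he : e.Injective)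
    (hf : ∀ i, ∀ m ∈ ℳ i, f m ∈ ℳ (e i)) (i : ι) (m : M) :
    f (decompose ℳ m i) = decompose ℳ (f m) (e i) := by
  induction m using Decomposition.inductionOn ℳ with
  | zero => simp
  | @homogeneous j m =>
    by_cases hji : j = i
    · subst hji
      rw [decompose_of_mem_same ℳ m.2, decompose_of_mem_same ℳ (hf j m m.2)]
    · rw [decompose_of_mem_ne ℳ m.2 hji, map_zero,
        decompose_of_mem_ne ℳ (hf j m m.2) (he.ne hji)]
  | add m m' hm hm' =>
    simp only [decompose_add, DirectSum.add_apply, AddMemClass.coe_add, map_add, hm, hm']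

end Decomposition

section GradedDuality

variable {ι K M : Type*} [DecidableEq ι] [Field K] [AddCommGroup M] [Module K M]

theorem Submodule.mem_of_forall_leftOrthogonal [FiniteDimensional K M]
    {B : M →ₗ[K] M →ₗ[K] K} (hB : Function.Injective B) {P : Submodule K M} {m : M}
    (hm : ∀ v, (∀ p ∈ P, B v p = 0) → B v m = 0) : m ∈ P := by
  have hsurj : Function.Surjective B :=
    (LinearMap.injective_iff_surjective_of_finrank_eq_finrank
      Subspace.dual_finrank_eq.symm).mp hB
  rw [← Subspace.forall_mem_dualAnnihilator_apply_eq_zero_iff P m]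
  intro φ hφ
  obtain ⟨v, rfl⟩ := hsurj φ
  exact hm v fun p hp => (Submodule.mem_dualAnnihilator _).mp hφ p hp

variable (W : ι → Submodule K M) [Decomposition W]

theorem isHomogeneous_span_of_decompose_mem {G : Set M}
    (hG : ∀ i, ∀ g ∈ G, (decompose W g i : M) ∈ Submodule.span K G) :
    SetLike.IsHomogeneous W (Submodule.span K G) := by
  intro i m hm
  induction hm using Submodule.span_induction with
  | mem g hg => exact hG i g hg
  | zero => simp
  | add a b _ _ ha hb =>
    rw [decompose_add, DirectSum.add_apply, Submodule.coe_add]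
    exact add_mem ha hb
  | smul c a _ ha =>
    rw [decompose_smul, DirectSum.smul_apply, Submodule.coe_smul]
    exact Submodule.smul_mem _ c ha

variable {W} {B : M →ₗ[K] M →ₗ[K] K}

theorem apply_decompose_of_mem (horth : ∀ i j, i ≠ j → ∀ a ∈ W i, ∀ b ∈ W j, B a b = 0)
    {i : ι} {a : M} (ha : a ∈ W i) (b : M) :
    B a (decompose W b i) = B a b := by
  induction b using Decomposition.inductionOn W with
  | zero => simp
  | @homogeneous j b =>
    by_cases hji : j = i
    · subst hji
      rw [decompose_of_mem_same W b.2]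
    · rw [decompose_of_mem_ne W b.2 hji, horth i j (Ne.symm hji) a ha b b.2, map_zero]
  | add b b' hb hb' =>
    simp only [decompose_add, DirectSum.add_apply, Submodule.coe_add, map_add, hb, hb']

theorem mem_of_forall_leftOrthogonal_of_isHomogeneous [∀ i, FiniteDimensional K (W i)]
    (horth : ∀ i j, i ≠ j → ∀ a ∈ W i, ∀ b ∈ W j, B a b = 0) (hB : Function.Injective B)
    {N : Submodule K M} (hN : SetLike.IsHomogeneous W N) {m : M}
    (hm : ∀ v, (∀ n ∈ N, B v n = 0) → B v m = 0) : m ∈ N := by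
  rw [AddSubmonoidClass.IsHomogeneous.mem_iff W N hN]
  intro i
  let Bi := B.compl₁₂ (W i).subtype (W i).subtype
  have hBi : Function.Injective Bi := by
    refine (injective_iff_map_eq_zero Bi).2 fun a ha => Subtype.ext <|
      (injective_iff_map_eq_zero B).1 hB _ (LinearMap.ext fun b => ?_)
    rw [← apply_decompose_of_mem horth a.2 b]
    exact LinearMap.congr_fun ha (decompose W b i)
  suffices decompose W m i ∈ N.comap (W i).subtype from this
  refine Submodule.mem_of_forall_leftOrthogonal hBi fun v hv => ?_
  have hvN : ∀ n ∈ N, B v n = 0 := fun n hn => by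
    rw [← apply_decompose_of_mem horth v.2 n]
    exact hv _ (hN i hn)
  exact (apply_decompose_of_mem horth v.2 m).trans (hm v hvN)

end GradedDuality

section Contravariant

variable {K U M : Type*} [Field K] [Ring U] [AddCommGroup M] [Module K M] [Module U M]

theorem forall_smul_eq_zero_iff_orthogonal_span {ω : U → U} {Φ : M →ₗ[K] M →ₗ[K] K}
    (hcontra : ∀ (x : U) (a b : M), Φ (x • a) b = Φ a (ω x • b)) (hΦ : Function.Injective Φ)
    (J : Set U) (v : M) :
    (∀ x ∈ J, x • v = 0) ↔
      ∀ n ∈ Submodule.span K {m : M | ∃ x ∈ J, ∃ w : M, m = ω x • w}, Φ v n = 0 := by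
  constructor
  · intro hv n hn
    refine (Submodule.span_le (p := LinearMap.ker (Φ v)).2 ?_ hn : _)
    rintro _ ⟨x, hx, w, rfl⟩
    rw [SetLike.mem_coe, LinearMap.mem_ker, ← hcontra, hv x hx, map_zero, LinearMap.zero_apply]
  · intro hv x hx
    refine (injective_iff_map_eq_zero Φ).1 hΦ _ (LinearMap.ext fun w => ?_)
    exact (hcontra x v w).trans (hv _ (Submodule.subset_span ⟨x, hx, w, rfl⟩))

theorem isHomogeneous_span_smul {ι : Type*} [DecidableEq ι] [AddCommGroup ι] [Module K U]
    (W : ι → Submodule K M) [Decomposition W] (S : ι → Submodule K U) (ω : U →+ U)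
    (hact : ∀ γ μ : ι, ∀ x ∈ S γ, ∀ m ∈ W μ, x • m ∈ W (γ + μ))
    (hωgr : ∀ γ : ι, ∀ x ∈ S γ, ω x ∈ S (-γ))
    {J : Submodule K U} (hJ : J ≤ ⨆ γ : ι, J ⊓ S γ) :
    SetLike.IsHomogeneous W (Submodule.span K {m : M | ∃ x ∈ J, ∃ w : M, m = ω x • w}) := by
  refine isHomogeneous_span_of_decompose_mem W ?_
  rintro μ _ ⟨x, hx, w, rfl⟩
  refine Submodule.iSup_induction _ (motive := fun x =>
    (decompose W (ω x • w) μ : M) ∈ Submodule.span K {m : M | ∃ x ∈ J, ∃ w : M, m = ω x • w})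
    (hJ hx) (fun γ y hy => ?_) (by simp) (fun y z hy hz => ?_)
  · have hcomm : ω y • (decompose W w (μ + γ) : M) = decompose W (ω y • w) (-γ + (μ + γ)) :=
      map_decompose_of_mapsTo W (DistribSMul.toAddMonoidHom M (ω y))
        (add_right_injective (-γ)) (fun ν => hact (-γ) ν _ (hωgr γ y hy.2)) (μ + γ) w
    rw [neg_add_cancel_comm_assoc] at hcomm
    rw [← hcomm]
    exact Submodule.subset_span ⟨y, hy.1, _, rfl⟩
  · rw [map_add, add_smul, decompose_add, DirectSum.add_apply, Submodule.coe_add]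
    exact add_mem hy hz

end Contravariant

theorem kernel_orthocomplement_contravariant_general
    (Λ : Type) [AddCommGroup Λ] [DecidableEq Λ]
    (U : Type) [Ring U] [Algebra ℂ U]
    (M : Type) [AddCommGroup M] [Module ℂ M] [Module U M]
    (ω : U → U)
    (hωadd : ∀ x y : U, ω (x + y) = ω x + ω y)
    (Φ : M →ₗ[ℂ] M →ₗ[ℂ] ℂ)
    (hcontra : ∀ (x : U) (a b : M), Φ (x • a) b = Φ a (ω x • b))
    (hnd1 : ∀ a : M, (∀ b : M, Φ a b = 0) → a = 0)
    (W : Λ → Submodule ℂ M) (hW : DirectSum.IsInternal W)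
    (hfin : ∀ μ : Λ, FiniteDimensional ℂ (W μ))
    (S : Λ → Submodule ℂ U)
    (hact : ∀ γ μ : Λ, ∀ x ∈ S γ, ∀ m ∈ W μ, x • m ∈ W (γ + μ))
    (hωgr : ∀ γ : Λ, ∀ x ∈ S γ, ω x ∈ S (-γ))
    (horth : ∀ μ ν : Λ, μ ≠ ν → ∀ a ∈ W μ, ∀ b ∈ W ν, Φ a b = 0)
    (J : Submodule ℂ U)
    (hJgraded : J = ⨆ γ : Λ, (J ⊓ S γ)) :
    ({m : M | ∀ v : M, (∀ x ∈ J, x • v = 0) → Φ v m = 0}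
        = (Submodule.span ℂ {m : M | ∃ x ∈ J, ∃ w : M, m = ω x • w} : Set M)) ∧
    (∀ v : M, (∀ x ∈ J, x • v = 0) →
      ∀ m ∈ Submodule.span ℂ {m : M | ∃ x ∈ J, ∃ w : M, m = ω x • w}, Φ v m = 0) ∧
    (∀ v : M, (∀ x ∈ J, x • v = 0) → v ≠ 0 → ∃ m : M, Φ v m ≠ 0) := by
  let := hW.chooseDecomposition
  have hΦ : Function.Injective Φ :=
    (injective_iff_map_eq_zero Φ).2 fun a ha => hnd1 a fun b => by rw [ha, LinearMap.zero_apply]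
  have hperp := forall_smul_eq_zero_iff_orthogonal_span hcontra hΦ J
  have hN := isHomogeneous_span_smul W S (AddMonoidHom.mk' ω hωadd) hact hωgr hJgraded.le
  refine ⟨subset_antisymm (fun m hm => ?_) (fun m hm v hv => (hperp v).1 hv m hm),
    fun v => (hperp v).1, fun v _ hv0 => ?_⟩
  · exact mem_of_forall_leftOrthogonal_of_isHomogeneous horth hΦ hN
      fun v hv => hm v ((hperp v).2 hv)
  · by_contra! h
    exact hv0 (hnd1 v h)

/-- let `V` (= `M` below) be an irreducible highest weight module with
nondegenerate contravariant form `Φ` over a triangularly graded algebra `U` with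
contravariant anti-involution `ω`, with finite-dimensional weight spaces, and let
`J⁺` be a graded left ideal.  Set `V^{J⁺} = {v : J⁺ v = 0}`.  Then the orthogonal
complement of `V^{J⁺}` is `ω(J⁺)V`, and the form induces a nondegenerate pairing
between `V^{J⁺}` and `V/ω(J⁺)V`. -/
theorem kernel_orthocomplement_contravariant
    (Λ : Type) [AddCommGroup Λ] [DecidableEq Λ]
    (U : Type) [Ring U] [Algebra ℂ U]
    (M : Type) [AddCommGroup M] [Module ℂ M] [Module U M] [IsScalarTower ℂ U M]
    (ω : U → U)
    (hωadd : ∀ x y : U, ω (x + y) = ω x + ω y)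
    (hωmul : ∀ x y : U, ω (x * y) = ω y * ω x)
    (hωinv : ∀ x : U, ω (ω x) = x)
    (Φ : M →ₗ[ℂ] M →ₗ[ℂ] ℂ)
    (hcontra : ∀ (x : U) (a b : M), Φ (x • a) b = Φ a (ω x • b))
    (hnd1 : ∀ a : M, (∀ b : M, Φ a b = 0) → a = 0)
    (hnd2 : ∀ b : M, (∀ a : M, Φ a b = 0) → b = 0)
    (W : Λ → Submodule ℂ M) (hW : DirectSum.IsInternal W)
    (hfin : ∀ μ : Λ, FiniteDimensional ℂ (W μ))
    (S : Λ → Submodule ℂ U)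
    (hSsup : ⨆ γ : Λ, S γ = ⊤)
    (hSone : (1 : U) ∈ S 0)
    (hSmul : ∀ γ δ : Λ, ∀ x ∈ S γ, ∀ y ∈ S δ, x * y ∈ S (γ + δ))
    (hact : ∀ γ μ : Λ, ∀ x ∈ S γ, ∀ m ∈ W μ, x • m ∈ W (γ + μ))
    (hωgr : ∀ γ : Λ, ∀ x ∈ S γ, ω x ∈ S (-γ))
    (horth : ∀ μ ν : Λ, μ ≠ ν → ∀ a ∈ W μ, ∀ b ∈ W ν, Φ a b = 0)
    (J : Submodule ℂ U)
    (hJleft : ∀ x : U, ∀ y ∈ J, x * y ∈ J)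
    (hJgraded : J = ⨆ γ : Λ, (J ⊓ S γ)) :
    ({m : M | ∀ v : M, (∀ x ∈ J, x • v = 0) → Φ v m = 0}
        = (Submodule.span ℂ {m : M | ∃ x ∈ J, ∃ w : M, m = ω x • w} : Set M)) ∧
    (∀ v : M, (∀ x ∈ J, x • v = 0) →
      ∀ m ∈ Submodule.span ℂ {m : M | ∃ x ∈ J, ∃ w : M, m = ω x • w}, Φ v m = 0) ∧
    (∀ v : M, (∀ x ∈ J, x • v = 0) → v ≠ 0 → ∃ m : M, Φ v m ≠ 0) :=
  kernel_orthocomplement_contravariant_general Λ U M ω hωadd Φ hcontra hnd1 W hW hfin S hact hωgr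
    horth J hJgraded
end
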